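/- arXiv:1902.07680 — 2 statements merged into one kernel-verified Lean document; each statement's English description precedes it below -/
import Mathlib

section
/- Let A′, A″ ⊆ Sym2 S each be i-connected sets of unordered pairs of distinct points of the circle S, and suppose that no element of A′ links any element of A″. If g′ is an unordered pair with both of its points in the closure of T(A′) and g″ is an unordered pair with both of its points in the closure of T(A″), then g′ does not link g″. (In particular, boundary geodesics of the convex hulls of two distinct i-connected components of a set of geodesics never intersect transversally: i(Δ(Hull A′), Δ(Hull A″)) = 0.) -/
/- STATEMENT 1: Let A′, A″ ⊆ Sym2 S each be i-connected sets of unordered pairs of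
distinct points of the circle S, and suppose that no element of A′ links any element
of A″. If g′ is an unordered pair with both of its points in the closure of T(A′) and
g″ is an unordered pair with both of its points in the closure of T(A″), then g′ does
not link g″. -/

attribute [local instance] ZeroLEOneClass.factZeroLtOne

noncomputable section

/-- The circle ℝ/ℤ. -/
abbrev Circle' : Type := AddCircle (1 : ℝ)

/-- The ordered pairs `(a,b)` and `(c,d)` link. -/
def LinkPair (a b c d : Circle') : Prop :=
  (sbtw a c b ∧ sbtw b d a) ∨ (sbtw a d b ∧ sbtw b c a)

/-- Two unordered pairs of points of the circle link. -/
def Links (g h : Sym2 Circle') : Prop :=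
  ∃ a b c d : Circle', g = s(a, b) ∧ h = s(c, d) ∧ LinkPair a b c d

/-- `T A`: the set of all points of the circle occurring in pairs of `A`. -/
def pts (A : Set (Sym2 Circle')) : Set Circle' := {x | ∃ s ∈ A, x ∈ s}

/-- The linking graph of `A`: vertices are the elements of `A`, and two distinct
vertices are adjacent iff they link. -/
def linkGraph (A : Set (Sym2 Circle')) : SimpleGraph A :=
  SimpleGraph.fromRel fun g h => Links g.1 h.1

/-- `A` is i-connected if its linking graph is connected. -/
def IConnected (A : Set (Sym2 Circle')) : Prop := (linkGraph A).Connected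

/-
If `{c, d}` links no element of an i-connected set `A`, then `T(A)` lies in one of the two closed
arcs `[c, d]`, `[d, c]`: a pair that links a pair inside an arc without linking `{c, d}` stays
inside that arc, so the property spreads along the linking graph; as closed arcs are closed, the
closure of `T(A)` lies in the same arc. Applied to `A'` against each element of `A''`, this shows
that `{a, b}` links no element of `A''`; applied to `A''` against `{a, b}`, it puts `c` and `d` on
one side of `{a, b}`.
-/

open Set

section CircularOrder

variable {α : Type*} [CircularOrder α] {a b c d p q u v : α}

theorem Btw.btw.eq_or_eq_or_sbtw (h : btw a b c) (hac : a ≠ c) :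
    b = a ∨ b = c ∨ sbtw a b c := by
  by_cases hcba : btw c b a
  · rcases h.antisymm hcba with rfl | rfl | rfl
    exacts [Or.inl rfl, Or.inr (Or.inl rfl), absurd rfl hac]
  · exact Or.inr (Or.inr (sbtw_iff_not_btw.2 hcba))

theorem sbtw_trans_right_of_btw (habc : sbtw a b c) (hacd : btw a c d) (had : a ≠ d) :
    sbtw a b d := by
  rcases hacd.eq_or_eq_or_sbtw had with rfl | rfl | hacd
  exacts [absurd habc sbtw_irrefl_left_right, habc, sbtw_trans_right habc hacd]

theorem sbtw_trans_left_of_btw (habc : btw a b c) (hbdc : sbtw b d c) (hac : a ≠ c) :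
    sbtw a d c := by
  rcases habc.eq_or_eq_or_sbtw hac with rfl | rfl | habc
  exacts [hbdc, absurd hbdc sbtw_irrefl_left_right, habc.trans_left hbdc]

theorem sbtw_of_sbtw_of_sbtw (habc : sbtw a b c) (hbdc : sbtw b d c) : sbtw a b d :=
  (sbtw_trans_right hbdc habc.cyclic_left).cyclic_right

/-- The open arc `(d, c)` contains neither `p` nor `q`, so it lies in `(p, q)` or in `(q, p)`,
and `v` rules out the first. -/
theorem mem_cIcc_of_sbtw_of_sbtw (hp : p ∈ cIcc c d) (hq : q ∈ cIcc c d) (hu : sbtw p u q)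
    (hv : sbtw q v p) (hv' : v ∈ cIcc d c) : u ∈ cIcc c d := by
  rw [mem_cIcc] at *
  by_cases hcd : c = d
  · exact hcd ▸ btw_refl_left_right c u
  by_contra hu'
  have hdu : sbtw d u c := sbtw_iff_not_btw.2 hu'
  rcases hq.eq_or_eq_or_sbtw hcd with rfl | rfl | hq
  · exact (sbtw_trans_right_of_btw hv hp hcd).not_btw hv'
  · exact (sbtw_trans_left_of_btw hp hu hcd).not_btw hdu.btw
  rcases hp.eq_or_eq_or_sbtw hcd with rfl | rfl | hp
  · exact (sbtw_trans_right_of_btw hu hq.btw hcd).not_btw hdu.btw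
  · exact (sbtw_trans_left_of_btw hq.btw hv hcd).not_btw hv'
  have hqu : sbtw q u c := hq.cyclic_left.trans_left hdu
  have hpc : sbtw p c q := hu.trans_left hqu.cyclic_left
  have hcv : sbtw c v p := hpc.cyclic_left.trans_left hv
  exact (sbtw_trans_right hcv hp).not_btw hv'

end CircularOrder

section Circle

variable {a b c d p q u v : Circle'}

theorem LinkPair.swap_left (h : LinkPair a b c d) : LinkPair b a c d := by
  unfold LinkPair at *; tauto

theorem LinkPair.swap_right (h : LinkPair a b c d) : LinkPair a b d c := by
  unfold LinkPair at *; tauto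

theorem LinkPair.symm (h : LinkPair a b c d) : LinkPair c d a b := by
  rcases h with ⟨hacb, hbda⟩ | ⟨hadb, hbca⟩
  · exact Or.inr ⟨sbtw_of_sbtw_of_sbtw hacb.cyclic_left hbda,
      (hacb.cyclic_left.trans_left hbda).cyclic_left⟩
  · exact Or.inl ⟨(hadb.cyclic_left.trans_left hbca).cyclic_left,
      sbtw_of_sbtw_of_sbtw hadb.cyclic_left hbca⟩

theorem not_linkPair_iff :
    ¬ LinkPair a b c d ↔ (c ∈ cIcc a b ∧ d ∈ cIcc a b) ∨ (c ∈ cIcc b a ∧ d ∈ cIcc b a) := by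
  have := btw_total a c b
  have := btw_total a d b
  simp only [LinkPair, mem_cIcc, sbtw_iff_not_btw]
  tauto

theorem links_mk_iff : Links s(a, b) s(c, d) ↔ LinkPair a b c d := by
  refine ⟨?_, fun h => ⟨a, b, c, d, rfl, rfl, h⟩⟩
  rintro ⟨a', b', c', d', hab, hcd, h⟩
  rw [Sym2.eq_iff] at hab hcd
  rcases hab with ⟨rfl, rfl⟩ | ⟨rfl, rfl⟩ <;> rcases hcd with ⟨rfl, rfl⟩ | ⟨rfl, rfl⟩
  exacts [h, h.swap_right, h.swap_left, h.swap_left.swap_right]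

theorem Links.symm {g h : Sym2 Circle'} (hl : Links g h) : Links h g := by
  obtain ⟨a, b, c, d, rfl, rfl, h⟩ := hl
  exact links_mk_iff.2 h.symm

theorem LinkPair.mem_cIcc (hp : p ∈ cIcc c d) (hq : q ∈ cIcc c d) (hl : LinkPair p q u v)
    (hnl : ¬ LinkPair c d u v) : u ∈ cIcc c d ∧ v ∈ cIcc c d := by
  rcases not_linkPair_iff.1 hnl with h | ⟨hu, hv⟩
  · exact h
  rcases hl with ⟨hpuq, hqvp⟩ | ⟨hpvq, hqup⟩
  · exact ⟨mem_cIcc_of_sbtw_of_sbtw hp hq hpuq hqvp hv,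
      mem_cIcc_of_sbtw_of_sbtw hq hp hqvp hpuq hu⟩
  · exact ⟨mem_cIcc_of_sbtw_of_sbtw hq hp hqup hpvq hv,
      mem_cIcc_of_sbtw_of_sbtw hp hq hpvq hqup hu⟩

theorem Links.forall_mem_cIcc {g h : Sym2 Circle'} (hl : Links g h) (hnl : ¬ Links h s(c, d))
    (hg : ∀ x ∈ g, x ∈ cIcc c d) : ∀ x ∈ h, x ∈ cIcc c d := by
  obtain ⟨p, q, u, v, rfl, rfl, hl⟩ := hl
  obtain ⟨hu, hv⟩ := hl.mem_cIcc (hg p (Sym2.mem_mk_left p q)) (hg q (Sym2.mem_mk_right p q))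
    fun h => hnl (links_mk_iff.2 h.symm)
  simpa only [Sym2.mem_iff, forall_eq_or_imp, forall_eq] using ⟨hu, hv⟩

theorem pts_subset_cIcc_of_mem {A : Set (Sym2 Circle')} (hconn : IConnected A)
    (hno : ∀ g ∈ A, ¬ Links g s(c, d)) {g₀ : Sym2 Circle'} (hg₀ : g₀ ∈ A)
    (hg₀c : ∀ x ∈ g₀, x ∈ cIcc c d) : pts A ⊆ cIcc c d := by
  have walk_mem : ∀ {g h : A}, (linkGraph A).Walk g h →
      (∀ x ∈ g.1, x ∈ cIcc c d) → ∀ x ∈ h.1, x ∈ cIcc c d := by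
    intro g h w
    induction w with
    | nil => exact id
    | cons hadj _ ih =>
      obtain ⟨-, hl | hl⟩ := (SimpleGraph.fromRel_adj _ _ _).1 hadj
      · exact fun hg => ih (hl.forall_mem_cIcc (hno _ (Subtype.prop _)) hg)
      · exact fun hg => ih (hl.symm.forall_mem_cIcc (hno _ (Subtype.prop _)) hg)
  rintro x ⟨g, hg, hxg⟩
  obtain ⟨w⟩ := hconn.preconnected ⟨g₀, hg₀⟩ ⟨g, hg⟩
  exact walk_mem w hg₀c x hxg

theorem pts_subset_cIcc_or {A : Set (Sym2 Circle')} (hconn : IConnected A)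
    (hno : ∀ g ∈ A, ¬ Links g s(c, d)) : pts A ⊆ cIcc c d ∨ pts A ⊆ cIcc d c := by
  obtain ⟨⟨g₀, hg₀⟩⟩ := hconn.nonempty
  induction g₀ using Sym2.ind with | h p q => ?_
  have hno' : ∀ g ∈ A, ¬ Links g s(d, c) := Sym2.eq_swap (a := c) ▸ hno
  have hpq : ∀ {c d}, p ∈ cIcc c d → q ∈ cIcc c d → ∀ x ∈ s(p, q), x ∈ cIcc c d := by
    simp only [Sym2.mem_iff, forall_eq_or_imp, forall_eq]
    exact fun hp hq => ⟨hp, hq⟩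
  rcases not_linkPair_iff.1 fun h => hno _ hg₀ (links_mk_iff.2 h.symm) with ⟨hp, hq⟩ | ⟨hp, hq⟩
  · exact Or.inl (pts_subset_cIcc_of_mem hconn hno hg₀ (hpq hp hq))
  · exact Or.inr (pts_subset_cIcc_of_mem hconn hno' hg₀ (hpq hp hq))

theorem isClosed_cIcc (x y : Circle') : IsClosed (cIcc x y) := by
  induction x using QuotientAddGroup.induction_on with | H c => ?_
  induction y using QuotientAddGroup.induction_on with | H d => ?_
  suffices cIcc (c : Circle') d = (↑) '' Icc c (toIocMod one_pos c d) from
    this ▸ (isCompact_Icc.image (AddCircle.continuous_mk' 1)).isClosed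
  ext x
  induction x using QuotientAddGroup.induction_on with | H x => ?_
  rw [mem_cIcc]
  constructor
  · intro h
    rw [QuotientAddGroup.btw_coe_iff] at h
    refine ⟨toIcoMod one_pos c x, ⟨(toIcoMod_mem_Ico one_pos c x).1, h⟩, ?_⟩
    exact QuotientAddGroup.eq_iff_sub_mem.2 ⟨_, (toIcoMod_sub_self one_pos c x).symm⟩
  · rintro ⟨s, ⟨hcs, hsd⟩, hsx⟩
    rw [← hsx, QuotientAddGroup.btw_coe_iff]
    rcases lt_or_ge s (c + 1) with hs | hs
    · rwa [(toIcoMod_eq_self one_pos).2 ⟨hcs, hs⟩]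
    · exact ((toIcoMod_mem_Ico one_pos c s).2.trans_le (hs.trans hsd)).le

theorem not_links_of_mem_closure_pts {A : Set (Sym2 Circle')} (hconn : IConnected A)
    {h : Sym2 Circle'} (hno : ∀ g ∈ A, ¬ Links g h) (ha : a ∈ closure (pts A))
    (hb : b ∈ closure (pts A)) : ¬ Links s(a, b) h := by
  induction h using Sym2.ind with | h c d => ?_
  rw [links_mk_iff]
  intro hl
  refine not_linkPair_iff.2 ?_ hl.symm
  rcases pts_subset_cIcc_or hconn hno with hA | hA
  · have hA := closure_minimal hA (isClosed_cIcc c d)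
    exact Or.inl ⟨hA ha, hA hb⟩
  · have hA := closure_minimal hA (isClosed_cIcc d c)
    exact Or.inr ⟨hA ha, hA hb⟩

end Circle

theorem no_linking_between_hulls_of_unlinked_iconnected_sets_general
    (A' A'' : Set (Sym2 Circle'))
    (hconn' : IConnected A') (hconn'' : IConnected A'')
    (hno : ∀ g ∈ A', ∀ h ∈ A'', ¬ Links g h)
    (a b : Circle') (ha : a ∈ closure (pts A')) (hb : b ∈ closure (pts A'))
    (c d : Circle') (hc : c ∈ closure (pts A'')) (hd : d ∈ closure (pts A'')) :
    ¬ Links s(a, b) s(c, d) := by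
  have hab : ∀ h ∈ A'', ¬ Links h s(a, b) := fun h hh hl =>
    not_links_of_mem_closure_pts hconn' (fun g hg => hno g hg h hh) ha hb hl.symm
  exact fun hl => not_links_of_mem_closure_pts hconn'' hab hc hd hl.symm

theorem no_linking_between_hulls_of_unlinked_iconnected_sets
    (A' A'' : Set (Sym2 Circle'))
    (hA' : ∀ s ∈ A', ¬ s.IsDiag) (hA'' : ∀ s ∈ A'', ¬ s.IsDiag)
    (hconn' : IConnected A') (hconn'' : IConnected A'')
    (hno : ∀ g ∈ A', ∀ h ∈ A'', ¬ Links g h)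
    (a b : Circle') (ha : a ∈ closure (pts A')) (hb : b ∈ closure (pts A'))
    (c d : Circle') (hc : c ∈ closure (pts A'')) (hd : d ∈ closure (pts A'')) :
    ¬ Links s(a, b) s(c, d) :=
  no_linking_between_hulls_of_unlinked_iconnected_sets_general A' A'' hconn' hconn'' hno a b ha hb c
    d hc hd
end
end

section
/- For all x, y, z ∈ ℍ one has the inclusions G⋔([x,z)) ⊆ G⋔([x,y)) ∪ G⋔([y,z)) and G⋔((x,z]) ⊆ G⋔((x,y]) ∪ G⋔((y,z]). -/
/-! Every geodesic is the zero set in `ℍ` of a form `Q = cycleForm α β γ`, and an element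
of `SL(2, ℝ)` moving `p` and `q` onto the imaginary axis turns `Q` into a form of the same kind,
which at `i eᵗ` reads `A e²ᵗ + B` up to a positive factor: an affine function of the increasing
`e²ᵗ`. Hence a geodesic crosses `[p, q)` exactly once iff `Q p * Q q ≤ 0` and `Q q ≠ 0`, and this
sign condition for `[p, r)` holds for `[p, q)` or for `[q, r)`, whatever the sign of `Q q`. -/

open OnePoint
open scoped UpperHalfPlane

noncomputable section

/-- The geodesic of ℍ with ideal endpoints the unordered pair `s` of boundary points:
a Euclidean half-circle for a pair of distinct reals, a vertical line for a pair
`{x, ∞}`, and ∅ for a diagonal pair. -/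
def geod (s : Sym2 (OnePoint ℝ)) : Set ℍ :=
  {z | (∃ a b : ℝ, a ≠ b ∧ s = s((a : OnePoint ℝ), (b : OnePoint ℝ)) ∧
          ‖(z : ℂ) - (↑a + ↑b) / 2‖ = |b - a| / 2) ∨
       (∃ x : ℝ, s = s((x : OnePoint ℝ), ∞) ∧ z.re = x)}

/-- The half-open hyperbolic segment `[x,y)`; the segment `(x,y]` is `segCO y x`. -/
def segCO (x y : ℍ) : Set ℍ := {z | dist x z + dist z y = dist x y} \ {y}

/-- `G⋔(I)`: the set of geodesics crossing `I` in exactly one point. -/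
def Gcross (I : Set ℍ) : Set (Sym2 (OnePoint ℝ)) := {s | ∃ z, geod s ∩ I = {z}}

open Set Function UpperHalfPlane
open scoped MatrixGroups

lemma zero_mem_uIcc_iff_mul_nonpos {u v : ℝ} : (0 : ℝ) ∈ uIcc u v ↔ u * v ≤ 0 := by
  rw [mem_uIcc, mul_nonpos_iff]
  tauto

lemma mul_nonpos_or_mul_nonpos_of_mul_nonpos {u v w : ℝ} (h : u * w ≤ 0) (hw : w ≠ 0) :
    (u * v ≤ 0 ∧ v ≠ 0) ∨ (v * w ≤ 0 ∧ w ≠ 0) := by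
  by_cases hv : v = 0
  · simp [hv, hw]
  by_cases huv : u * v ≤ 0
  · exact .inl ⟨huv, hv⟩
  refine .inr ⟨nonpos_of_mul_nonpos_right ?_ (not_le.1 huv), hw⟩
  calc u * v * (v * w) = v ^ 2 * (u * w) := by ring
    _ ≤ 0 := mul_nonpos_of_nonneg_of_nonpos (sq_nonneg v) h

lemma uIcc_diff_right_ne_singleton (a b t : ℝ) : uIcc a b \ {b} ≠ {t} := by
  intro h
  have hab : a ≠ b := fun hab => by simpa [hab] using h.symm.subset (mem_singleton t)
  have mem : ∀ s ∈ uIcc a b, s ≠ b → s = t := fun s hs hsb =>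
    (h.subset ⟨hs, hsb⟩ : s ∈ ({t} : Set ℝ))
  have hmid : (a + b) / 2 ∈ uIcc a b := by
    rcases le_total a b with h' | h' <;>
      simp only [h', uIcc_of_le, uIcc_of_ge, mem_Icc] <;> constructor <;> linarith
  have := mem a left_mem_uIcc hab
  have := mem _ hmid (fun h' => hab (by linarith))
  exact hab (by linarith)

lemma exists_preimage_zero_inter_uIcc_diff_eq_singleton_iff {f : ℝ → ℝ} (hf : Continuous f)
    (hinj : Injective f) (a b : ℝ) :
    (∃ t₀, f ⁻¹' {0} ∩ (uIcc a b \ {b}) = {t₀}) ↔ f a * f b ≤ 0 ∧ f b ≠ 0 := by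
  rw [exists_eq_singleton_iff_nonempty_subsingleton,
    and_iff_left ((subsingleton_singleton.preimage hinj).anti inter_subset_left)]
  constructor
  · rintro ⟨t, ht0, ht, htb⟩
    have hb : f b ≠ 0 := fun hb => htb (hinj (ht0.trans hb.symm))
    refine ⟨?_, hb⟩
    rw [← zero_mem_uIcc_iff_mul_nonpos, ← show f t = 0 from ht0]
    rcases hf.strictMono_of_inj hinj with hmono | hanti
    exacts [hmono.monotone.mapsTo_uIcc ht, hanti.antitone.mapsTo_uIcc ht]
  · rintro ⟨hab, hb⟩
    obtain ⟨t, ht, ht0⟩ := intermediate_value_uIcc hf.continuousOn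
      (zero_mem_uIcc_iff_mul_nonpos.2 hab)
    exact ⟨t, ht0, ht, fun htb => hb (by rw [← ht0, htb])⟩

lemma exists_affine_zero_inter_uIcc_diff_eq_singleton_iff {u : ℝ → ℝ} (hu : StrictMono u)
    (hc : Continuous u) (A B a b : ℝ) :
    (∃ t₀, (fun t => A * u t + B) ⁻¹' {0} ∩ (uIcc a b \ {b}) = {t₀}) ↔
      (A * u a + B) * (A * u b + B) ≤ 0 ∧ A * u b + B ≠ 0 := by
  rcases eq_or_ne A 0 with rfl | hA
  · simp only [zero_mul, zero_add]
    rcases eq_or_ne B 0 with rfl | hB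
    · simpa using uIcc_diff_right_ne_singleton a b
    · simp [hB, mul_self_pos.2 hB, eq_comm (a := ∅)]
  exact exists_preimage_zero_inter_uIcc_diff_eq_singleton_iff (by fun_prop)
    (fun s t h => hu.injective (mul_left_cancel₀ hA (add_right_cancel h))) a b

lemma Function.Injective.exists_image_eq_singleton_iff {α β : Type*} {f : α → β}
    (hf : Injective f) {s : Set α} : (∃ b, f '' s = {b}) ↔ ∃ a, s = {a} := by
  simp only [exists_eq_singleton_iff_nonempty_subsingleton, image_nonempty,
    hf.subsingleton_image_iff]

lemma Real.dist_add_dist_eq_iff_mem_uIcc {a b t : ℝ} :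
    dist a t + dist t b = dist a b ↔ t ∈ uIcc a b := by
  rw [dist_add_dist_eq_iff, ← mem_segment_iff_wbtw, segment_eq_uIcc]

def cycleForm (α β γ : ℝ) (w : ℂ) : ℝ := α * Complex.normSq w + β * w.re + γ

lemma cycleForm_div_mul_normSq (α β γ a b c d : ℝ) {w : ℂ} (h : (c : ℂ) * w + d ≠ 0) :
    cycleForm α β γ ((a * w + b) / (c * w + d)) * Complex.normSq (c * w + d) =
      cycleForm (α * a ^ 2 + β * a * c + γ * c ^ 2)
        (2 * α * a * b + β * (a * d + b * c) + 2 * γ * c * d)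
        (α * b ^ 2 + β * b * d + γ * d ^ 2) w := by
  have hN : Complex.normSq (c * w + d) ≠ 0 := (Complex.normSq_pos.2 h).ne'
  have hclear : cycleForm α β γ ((a * w + b) / (c * w + d)) * Complex.normSq (c * w + d) =
      α * Complex.normSq (a * w + b) +
        β * ((a * w + b).re * (c * w + d).re + (a * w + b).im * (c * w + d).im) +
        γ * Complex.normSq (c * w + d) := by
    simp only [cycleForm, Complex.normSq_div, Complex.div_re]
    generalize Complex.normSq (c * w + d) = N at hN ⊢
    field_simp
  rw [hclear]
  simp only [cycleForm, Complex.normSq_apply, Complex.add_re, Complex.add_im, Complex.mul_re,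
    Complex.mul_im, Complex.ofReal_re, Complex.ofReal_im]
  ring

lemma denom_ne_zero_SL (g : SL(2, ℝ)) (z : ℍ) : (g 1 0 : ℂ) * z + g 1 1 ≠ 0 := by
  have h := denom_ne_zero g z
  rw [denom] at h
  simpa using h

lemma normSq_denom_SL_pos (g : SL(2, ℝ)) (z : ℍ) : 0 < Complex.normSq (g 1 0 * z + g 1 1) :=
  Complex.normSq_pos.2 (denom_ne_zero_SL g z)

lemma cycleForm_smul_mul_normSq (α β γ : ℝ) (g : SL(2, ℝ)) (z : ℍ) :
    cycleForm α β γ ↑(g • z) * Complex.normSq (g 1 0 * z + g 1 1) =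
      cycleForm (α * g 0 0 ^ 2 + β * g 0 0 * g 1 0 + γ * g 1 0 ^ 2)
        (2 * α * g 0 0 * g 0 1 + β * (g 0 0 * g 1 1 + g 0 1 * g 1 0) + 2 * γ * g 1 0 * g 1 1)
        (α * g 0 1 ^ 2 + β * g 0 1 * g 1 1 + γ * g 1 1 ^ 2) z := by
  rw [coe_specialLinearGroup_apply]
  exact cycleForm_div_mul_normSq _ _ _ _ _ _ _ (denom_ne_zero_SL g z)

lemma re_smul_mul_normSq (g : SL(2, ℝ)) (z : ℍ) :
    (g • z).re * Complex.normSq (g 1 0 * z + g 1 1) =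
      cycleForm (g 0 0 * g 1 0) (g 0 0 * g 1 1 + g 0 1 * g 1 0) (g 0 1 * g 1 1) z := by
  simpa [cycleForm] using cycleForm_smul_mul_normSq 0 1 0 g z

lemma geod_diag (x : OnePoint ℝ) : geod s(x, x) = ∅ := by
  ext z
  simp only [geod, Sym2.eq_iff, mem_ofPred_eq, mem_empty_iff_false, iff_false]
  rintro (⟨a, b, hab, ⟨rfl, h⟩ | ⟨rfl, h⟩, -⟩ | ⟨c, ⟨rfl, h⟩ | ⟨rfl, h⟩, -⟩) <;>
    simp_all [OnePoint.coe_ne_infty]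

lemma geod_coe_infty (a : ℝ) : geod s((a : OnePoint ℝ), ∞) = {z | z.re = a} := by
  ext z
  simp [geod, eq_comm]

lemma geod_coe_coe {a b : ℝ} (hab : a ≠ b) :
    geod s((a : OnePoint ℝ), (b : OnePoint ℝ)) =
      {z : ℍ | ‖(z : ℂ) - (a + b) / 2‖ = |b - a| / 2} := by
  ext z
  simp only [geod, Sym2.eq_iff, OnePoint.coe_eq_coe, mem_ofPred_eq]
  refine ⟨?_, fun h => .inl ⟨a, b, hab, .inl ⟨rfl, rfl⟩, h⟩⟩
  rintro (⟨a', b', -, ⟨rfl, rfl⟩ | ⟨rfl, rfl⟩, h⟩ | ⟨c, ⟨-, h⟩ | ⟨h, -⟩, -⟩)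
  · exact h
  · rwa [add_comm, abs_sub_comm]
  all_goals exact absurd h (OnePoint.coe_ne_infty _)

lemma norm_sub_eq_iff_cycleForm_eq_zero (a b : ℝ) (w : ℂ) :
    ‖w - (a + b) / 2‖ = |b - a| / 2 ↔ cycleForm 1 (-(a + b)) (a * b) w = 0 := by
  rw [show ((a : ℂ) + b) / 2 = ((a + b) / 2 : ℝ) by push_cast; ring,
    ← sq_eq_sq₀ (norm_nonneg _) (by positivity), Complex.sq_norm, div_pow, sq_abs, cycleForm,
    Complex.normSq_apply, Complex.normSq_apply, Complex.sub_re, Complex.sub_im, Complex.ofReal_re,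
    Complex.ofReal_im, sub_zero]
  constructor <;> intro h <;> linear_combination h

lemma exists_geod_eq_setOf_cycleForm_eq_zero (s : Sym2 (OnePoint ℝ)) :
    ∃ α β γ : ℝ, geod s = {z : ℍ | cycleForm α β γ z = 0} := by
  have hempty : geod s = ∅ → ∃ α β γ : ℝ, geod s = {z : ℍ | cycleForm α β γ z = 0} :=
    fun h => ⟨0, 0, 1, by simp [h, cycleForm]⟩
  have hvert (a : ℝ) : geod s((a : OnePoint ℝ), ∞) = {z : ℍ | cycleForm 0 1 (-a) z = 0} := by
    simp [geod_coe_infty, cycleForm, sub_eq_zero, ← sub_eq_add_neg]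
  induction s using Sym2.ind with | _ x y => ?_
  induction x using OnePoint.rec with
  | infty =>
    induction y using OnePoint.rec with
    | infty => exact hempty (geod_diag ∞)
    | coe b => exact ⟨0, 1, -b, by rw [Sym2.eq_swap, hvert]⟩
  | coe a =>
    induction y using OnePoint.rec with
    | infty => exact ⟨0, 1, -a, hvert a⟩
    | coe b =>
      rcases eq_or_ne a b with rfl | hab
      · exact hempty (geod_diag _)
      · exact ⟨1, -(a + b), a * b, by
          simp [geod_coe_coe hab, norm_sub_eq_iff_cycleForm_eq_zero]⟩

def imAxis (t : ℝ) : ℍ := mk ⟨0, Real.exp t⟩ (Real.exp_pos t)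

@[simp] lemma imAxis_re (t : ℝ) : (imAxis t).re = 0 := rfl
@[simp] lemma imAxis_im (t : ℝ) : (imAxis t).im = Real.exp t := rfl

lemma isometry_imAxis : Isometry imAxis := isometry_vertical_line 0

lemma imAxis_log_im {w : ℍ} (h : w.re = 0) : imAxis (Real.log w.im) = w := by
  apply UpperHalfPlane.ext
  apply Complex.ext <;> simp [imAxis, h, Real.exp_log w.im_pos]

lemma re_eq_of_dist_eq_dist_log_im {z w : ℍ}
    (h : dist z w = dist (Real.log z.im) (Real.log w.im)) : z.re = w.re := by
  have hproj : dist (mk ⟨0, z.im⟩ z.im_pos) (mk ⟨0, w.im⟩ w.im_pos) = dist z w := by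
    rw [h]
    exact dist_of_re_eq (z := mk ⟨0, z.im⟩ z.im_pos) (w := mk ⟨0, w.im⟩ w.im_pos) rfl
  have hcosh := congrArg Real.cosh hproj
  simp only [cosh_dist, Complex.dist_eq, Complex.sq_norm, Complex.normSq_apply] at hcosh
  have := z.im_pos.ne'
  have := w.im_pos.ne'
  field_simp at hcosh
  simp only [mk_im, Complex.sub_re, sub_self, ne_eq, OfNat.ofNat_ne_zero, not_false_eq_true,
    zero_pow, Complex.sub_im, zero_add, coe_re, coe_im] at hcosh
  have hsq : z.im * w.im * (z.re - w.re) ^ 2 = 0 := by linear_combination -hcosh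
  simpa [(mul_pos z.im_pos w.im_pos).ne', sub_eq_zero] using hsq

lemma cycleForm_imAxis (α β γ t : ℝ) : cycleForm α β γ (imAxis t) = α * Real.exp t ^ 2 + γ := by
  simp [cycleForm, imAxis, Complex.normSq_apply, sq]

lemma dist_imAxis_add_dist_eq_iff (a b : ℝ) (w : ℍ) :
    dist (imAxis a) w + dist w (imAxis b) = dist (imAxis a) (imAxis b) ↔
      w ∈ imAxis '' uIcc a b := by
  constructor
  · intro h
    have ha := dist_log_im_le (imAxis a) w
    have hb := dist_log_im_le w (imAxis b)
    have hab := dist_triangle a (Real.log w.im) b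
    simp only [imAxis_im, Real.log_exp, isometry_imAxis.dist_eq] at ha hb h
    have hre := re_eq_of_dist_eq_dist_log_im (z := imAxis a) (w := w)
      (by simp only [imAxis_im, Real.log_exp]; linarith)
    refine ⟨Real.log w.im, Real.dist_add_dist_eq_iff_mem_uIcc.1 (by linarith), imAxis_log_im ?_⟩
    simpa using hre.symm
  · rintro ⟨t, ht, rfl⟩
    simpa only [isometry_imAxis.dist_eq] using Real.dist_add_dist_eq_iff_mem_uIcc.2 ht

lemma exists_smul_re_eq_zero (p q : ℍ) : ∃ g : SL(2, ℝ), (g • p).re = 0 ∧ (g • q).re = 0 := by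
  suffices ∃ g : SL(2, ℝ), ∀ z ∈ ({p, q} : Set ℍ),
      cycleForm (g 0 0 * g 1 0) (g 0 0 * g 1 1 + g 0 1 * g 1 0) (g 0 1 * g 1 1) z = 0 by
    obtain ⟨g, hg⟩ := this
    have hre (z : ℍ) (hz : z ∈ ({p, q} : Set ℍ)) : (g • z).re = 0 := by
      rw [← mul_eq_zero_iff_right (normSq_denom_SL_pos g z).ne', re_smul_mul_normSq]
      exact hg z hz
    exact ⟨g, hre p (by simp), hre q (by simp)⟩
  rcases eq_or_ne p.re q.re with hre | hre
  · refine ⟨⟨!![1, -p.re; 0, 1], by simp⟩, ?_⟩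
    simp [cycleForm, hre]
  -- `p` and `q` lie on the circle of center `c` and radius `r`, whose ends are sent to `0` and `∞`
  set c : ℝ := (p.re ^ 2 + p.im ^ 2 - q.re ^ 2 - q.im ^ 2) / (2 * (p.re - q.re))
  set r : ℝ := √((p.re - c) ^ 2 + p.im ^ 2)
  have hr : 0 < r := Real.sqrt_pos.2 (by nlinarith [p.im_pos])
  have hpr : (p.re - c) ^ 2 + p.im ^ 2 = r ^ 2 := (Real.sq_sqrt (by positivity)).symm
  have hqr : (q.re - c) ^ 2 + q.im ^ 2 = r ^ 2 := by
    rw [← hpr]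
    simp only [c]
    field_simp [sub_ne_zero.2 hre]
    ring
  refine ⟨⟨!![1, -(c + r); 1 / (2 * r), -(c - r) / (2 * r)], by
    simp [Matrix.det_fin_two_of]; field_simp; ring⟩, ?_⟩
  simp only [mem_insert_iff, mem_singleton_iff, forall_eq_or_imp, forall_eq]
  constructor <;>
    simp only [cycleForm, Matrix.of_apply, Matrix.cons_val', Matrix.cons_val_zero,
      Matrix.cons_val_one, Matrix.cons_val_fin_one, Complex.normSq_apply, coe_re, coe_im] <;>
    field_simp
  · linear_combination hpr
  · linear_combination hqr

lemma exists_smul_imAxis_eq (p q : ℍ) :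
    ∃ (g : SL(2, ℝ)) (a b : ℝ), g • imAxis a = p ∧ g • imAxis b = q := by
  obtain ⟨g, hp, hq⟩ := exists_smul_re_eq_zero p q
  exact ⟨g⁻¹, _, _, by rw [imAxis_log_im hp, inv_smul_smul],
    by rw [imAxis_log_im hq, inv_smul_smul]⟩

lemma injective_smul_imAxis (g : SL(2, ℝ)) : Injective fun t => g • imAxis t :=
  (MulAction.injective g).comp isometry_imAxis.injective

lemma segCO_smul_imAxis (g : SL(2, ℝ)) (a b : ℝ) :
    segCO (g • imAxis a) (g • imAxis b) = (fun t => g • imAxis t) '' (uIcc a b \ {b}) := by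
  rw [image_sdiff (injective_smul_imAxis g), image_singleton, segCO]
  congr 1
  ext z
  rw [mem_ofPred_eq, ← smul_inv_smul g z, dist_smul, dist_smul, dist_smul,
    dist_imAxis_add_dist_eq_iff, ← image_image (g • ·), (MulAction.injective g).mem_set_image]

lemma exists_setOf_cycleForm_eq_zero_inter_segCO_eq_singleton_iff (α β γ : ℝ) (p q : ℍ) :
    (∃ w, {z : ℍ | cycleForm α β γ z = 0} ∩ segCO p q = {w}) ↔
      cycleForm α β γ p * cycleForm α β γ q ≤ 0 ∧ cycleForm α β γ q ≠ 0 := by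
  obtain ⟨g, a, b, rfl, rfl⟩ := exists_smul_imAxis_eq p q
  set A := α * g 0 0 ^ 2 + β * g 0 0 * g 1 0 + γ * g 1 0 ^ 2
  set B := α * g 0 1 ^ 2 + β * g 0 1 * g 1 1 + γ * g 1 1 ^ 2
  have hN (t : ℝ) := normSq_denom_SL_pos g (imAxis t)
  have hform (t : ℝ) : cycleForm α β γ ↑(g • imAxis t) =
      (A * Real.exp t ^ 2 + B) / Complex.normSq (g 1 0 * imAxis t + g 1 1) := by
    rw [eq_div_iff (hN t).ne', cycleForm_smul_mul_normSq, cycleForm_imAxis]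
  have hzero : (fun t => g • imAxis t) ⁻¹' {z | cycleForm α β γ z = 0} =
      (fun t => A * Real.exp t ^ 2 + B) ⁻¹' {0} := by
    ext t
    simp only [mem_preimage, mem_ofPred_eq, mem_singleton_iff, hform, div_eq_zero_iff,
      (hN t).ne', or_false]
  have hexp : StrictMono fun t => Real.exp t ^ 2 := fun s t hst =>
    pow_lt_pow_left₀ (Real.exp_lt_exp.2 hst) (Real.exp_pos s).le two_ne_zero
  rw [segCO_smul_imAxis, inter_comm, ← image_inter_preimage, hzero, inter_comm,
    (injective_smul_imAxis g).exists_image_eq_singleton_iff,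
    exists_affine_zero_inter_uIcc_diff_eq_singleton_iff hexp (by fun_prop), hform, hform,
    div_mul_div_comm, div_le_iff₀ (mul_pos (hN a) (hN b)), zero_mul, div_ne_zero_iff,
    and_iff_left (hN b).ne']

lemma Gcross_segCO_subset_union (p q r : ℍ) :
    Gcross (segCO p r) ⊆ Gcross (segCO p q) ∪ Gcross (segCO q r) := by
  intro s hs
  obtain ⟨α, β, γ, hgeod⟩ := exists_geod_eq_setOf_cycleForm_eq_zero s
  simp only [Gcross, mem_union, mem_ofPred_eq, hgeod,
    exists_setOf_cycleForm_eq_zero_inter_segCO_eq_singleton_iff] at hs ⊢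
  exact mul_nonpos_or_mul_nonpos_of_mul_nonpos hs.1 hs.2

theorem crossing_set_subset_union (x y z : ℍ) :
    Gcross (segCO x z) ⊆ Gcross (segCO x y) ∪ Gcross (segCO y z) ∧
    Gcross (segCO z x) ⊆ Gcross (segCO y x) ∪ Gcross (segCO z y) :=
  ⟨Gcross_segCO_subset_union x y z,
    union_comm (Gcross (segCO z y)) _ ▸ Gcross_segCO_subset_union z y x⟩
end
end
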